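/- arXiv:1504.05806 — 2 statements merged into one kernel-verified Lean document; each statement's English description precedes it below -/
import Mathlib

section
/- Let E and 𝒯 be measurable spaces, fix t_y ∈ 𝒯, an integer S ≥ 1, tolerances ε_{n-1}, ε_n > 0, a prior density π on E, a model density f(·|·) on 𝒯 × E, kernels K_{ε} : 𝒯 → [0,∞), a forward mutation kernel M_n : E × E → [0,∞), and a backward kernel L_{n-1} : E × E → [0,∞). Consider the joint targets π_{J,m}(θ, t^{1:S}) ∝ [S^{-1} Σ_{s=1}^S K_{ε_m}(t_y − t^s)] [∏_{s=1}^S f(t^s|θ)] π(θ) for m ∈ {n-1, n}, and the factorized forward and backward kernels M̄_n[(θ_{n-1}, t_{n-1}^{1:S}), (θ_n, t_n^{1:S})] = M_n(θ_{n-1}, θ_n) ∏_{s=1}^S f(t_n^s|θ_n) and L̄_{n-1}[(θ_n, t_n^{1:S}), (θ_{n-1}, t_{n-1}^{1:S})] = L_{n-1}(θ_n, θ_{n-1}) ∏_{s=1}^S f(t_{n-1}^s|θ_{n-1}). Then, whenever all factors appearing in the denominator are nonzero, the unnormalized incremental weight π_{J,n}(θ_n, t_n^{1:S}) L̄_{n-1}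 / (π_{J,n-1}(θ_{n-1}, t_{n-1}^{1:S}) M̄_n) equals [S^{-1} Σ_s K_{ε_n}(t_y − t_n^s)] π(θ_n) L_{n-1}(θ_n, θ_{n-1}) / ([S^{-1} Σ_s K_{ε_{n-1}}(t_y − t_{n-1}^s)] π(θ_{n-1}) M_n(θ_{n-1}, θ_n)); i.e., all the model-density factors f(t^s|θ) cancel, and the joint-space incremental weight coincides with the (estimated) marginal-space incremental weight. -/
/-- In the joint-space SMC-ABC sampler with factorized forward kernel
`M̄_n = M_n(θ_{n-1},θ_n) ∏_s f(t_n^s|θ_n)` and backward kernel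
`L̄_{n-1} = L_{n-1}(θ_n,θ_{n-1}) ∏_s f(t_{n-1}^s|θ_{n-1})`, the unnormalized
incremental weight `π_{J,n} L̄_{n-1} / (π_{J,n-1} M̄_n)` equals the marginal-space
incremental weight
`[S⁻¹ ∑_s K_{ε_n}(t_y−t_n^s)] π(θ_n) L_{n-1}(θ_n,θ_{n-1}) /
 ([S⁻¹ ∑_s K_{ε_{n-1}}(t_y−t_{n-1}^s)] π(θ_{n-1}) M_n(θ_{n-1},θ_n))`:
all model-density factors `f(t^s|θ)` cancel, whenever all factors appearing in the
denominator are nonzero.  `Kprev`/`Kcur` are the kernels at tolerances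
`ε_{n-1}`/`ε_n`, and `tp`/`tn` the auxiliary summaries at stages `n-1`/`n`. -/
theorem abc_joint_incremental_weight_eq_marginal
    {E 𝒯 : Type*} [Sub 𝒯]
    (S : ℕ) (hS : 1 ≤ S)
    (π : E → ℝ) (f : E → 𝒯 → ℝ)
    (Kprev Kcur : 𝒯 → ℝ) (M L : E → E → ℝ)
    (t_y : 𝒯) (θp θn : E) (tp tn : Fin S → 𝒯)
    (hKprev : ((S : ℝ)⁻¹ * ∑ s : Fin S, Kprev (t_y - tp s)) ≠ 0)
    (hfp : (∏ s : Fin S, f θp (tp s)) ≠ 0)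
    (hfn : (∏ s : Fin S, f θn (tn s)) ≠ 0)
    (hπp : π θp ≠ 0)
    (hM : M θp θn ≠ 0) :
    (((S : ℝ)⁻¹ * ∑ s : Fin S, Kcur (t_y - tn s)) * (∏ s : Fin S, f θn (tn s)) * π θn *
        (L θn θp * ∏ s : Fin S, f θp (tp s))) /
      ((((S : ℝ)⁻¹ * ∑ s : Fin S, Kprev (t_y - tp s)) * (∏ s : Fin S, f θp (tp s)) * π θp) *
        (M θp θn * ∏ s : Fin S, f θn (tn s))) =
    (((S : ℝ)⁻¹ * ∑ s : Fin S, Kcur (t_y - tn s)) * π θn * L θn θp) /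
      (((S : ℝ)⁻¹ * ∑ s : Fin S, Kprev (t_y - tp s)) * π θp * M θp θn) := by
  rw [div_eq_div_iff
    (mul_ne_zero (mul_ne_zero (mul_ne_zero hKprev hfp) hπp) (mul_ne_zero hM hfn))
    (mul_ne_zero (mul_ne_zero hKprev hπp) hM)]
  ring
end

section
/- Let E and 𝒯 be measurable spaces with sigma-finite measures, fix t_y ∈ 𝒯 and S ≥ 1, and let π be a probability density on E, f(·|θ) a probability density on 𝒯 for each θ, and K_h : 𝒯 → [0,∞) measurable, with (θ, t) ↦ K_h(t_y − t) f(t|θ) π(θ) integrable on E × 𝒯 with strictly positive integral. Define the joint kernel K̃_h(t_y, t^{1:S}) = S^{-1} Σ_{s=1}^S K_h(t_y − t^s). Then the normalizing constants of the joint and marginal ABC posteriors coincide: ∫_E ∫_{𝒯^S} K̃_h(t_y, t^{1:S}) [∏_{s=1}^S f(t^s|θ)] π(θ) dt^{1:S} dθ = ∫_E ∫_𝒯 K_h(t_y − t) f(t|θ) π(θ) dt dθ; consequently the normalized joint posterior π_J(θ, t^{1:S}|t_y) integrates over 𝒯^S exactly to the normalized marginal posterior π_M(θ|t_y). -/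
/-!
For fixed `θ`, `∏ₛ f(tˢ|θ)` is a product of probability densities, so by Tonelli the summand
`K_h(t_y − tˢ) ∏ⱼ f(tʲ|θ)` integrates over `𝒯^S` to `∫ K_h(t_y − t) f(t|θ) dt`: every factor
`j ≠ s` integrates to one. The `S` summands are therefore equal and their average is the
marginal inner integral; integrating against `π`, or dividing by the common constant, gives
both claims.
-/

open MeasureTheory ENNReal Finset

section

variable {ι : Type*} [DecidableEq ι] {X : ι → Type*} [∀ i, MeasurableSpace (X i)]
  {μ : ∀ i, Measure (X i)} [∀ i, SigmaFinite (μ i)] [Fintype ι]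
  {g : ∀ i, X i → ℝ≥0∞}

theorem lmarginal_fintype_prod (hg : ∀ i, Measurable (g i)) (s : Finset ι) (x : ∀ i, X i) :
    (∫⋯∫⁻_s, (fun y => ∏ i, g i (y i)) ∂μ) x =
      ∏ i, if i ∈ s then ∫⁻ t, g i t ∂μ i else g i (x i) := by
  induction s using Finset.induction_on generalizing x with
  | empty => simp
  | insert i s hi ih =>
    have hmeas : Measurable fun y : ∀ i, X i => ∏ i, g i (y i) := by fun_prop
    have hsplit : ∀ xᵢ,
        (∏ j, if j ∈ s then ∫⁻ t, g j t ∂μ j else g j (Function.update x i xᵢ j)) =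
          g i xᵢ * ∏ j ∈ univ.erase i, (if j ∈ s then ∫⁻ t, g j t ∂μ j else g j (x j)) := by
      intro xᵢ
      rw [← mul_prod_erase univ _ (mem_univ i), if_neg hi, Function.update_self]
      refine congrArg _ (prod_congr rfl fun j hj => ?_)
      rw [Function.update_of_ne (ne_of_mem_erase hj)]
    simp_rw [lmarginal_insert _ hmeas hi, ih, hsplit, lintegral_mul_const _ (hg i),
      ← mul_prod_erase univ _ (mem_univ i), if_pos (mem_insert_self i s)]
    refine congrArg _ (prod_congr rfl fun j hj => ?_)
    simp only [mem_insert, ne_of_mem_erase hj, false_or]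

theorem lintegral_fintype_prod_eq_prod (hg : ∀ i, Measurable (g i)) :
    ∫⁻ x, ∏ i, g i (x i) ∂Measure.pi μ = ∏ i, ∫⁻ t, g i t ∂μ i := by
  rcases isEmpty_or_nonempty (∀ i, X i) with hX | ⟨⟨x⟩⟩
  · obtain ⟨i, hi⟩ := isEmpty_pi.mp hX
    rw [lintegral_of_isEmpty, eq_comm]
    exact prod_eq_zero (mem_univ i) (lintegral_of_isEmpty _ _)
  · simp [lintegral_eq_lmarginal_univ x, lmarginal_fintype_prod hg]

theorem lintegral_pi_comp_eval_mul_prod {p : ∀ i, X i → ℝ≥0∞} (hp : ∀ i, Measurable (p i))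
    {i₀ : ι} (hp_one : ∀ i ≠ i₀, ∫⁻ t, p i t ∂μ i = 1) {h : X i₀ → ℝ≥0∞} (hh : Measurable h) :
    ∫⁻ x, h (x i₀) * ∏ i, p i (x i) ∂Measure.pi μ = ∫⁻ t, h t * p i₀ t ∂μ i₀ := by
  set q := Function.update p i₀ (fun t => h t * p i₀ t)
  have hq : ∀ i, Measurable (q i) := by
    intro i
    rcases eq_or_ne i i₀ with rfl | hi
    · simp only [q, Function.update_self]
      exact hh.mul (hp i)
    · simpa [q, Function.update_of_ne hi] using hp i
  have hprod : ∀ x : ∀ i, X i, h (x i₀) * ∏ i, p i (x i) = ∏ i, q i (x i) := by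
    intro x
    rw [← mul_prod_erase univ _ (mem_univ i₀), ← mul_prod_erase univ (fun i => q i (x i))
      (mem_univ i₀), ← mul_assoc]
    simp only [q, Function.update_self]
    refine congrArg _ (prod_congr rfl fun i hi => ?_)
    rw [Function.update_of_ne (ne_of_mem_erase hi)]
  simp_rw [hprod, lintegral_fintype_prod_eq_prod hq]
  rw [prod_eq_single_of_mem i₀ (mem_univ i₀) fun i _ hi => ?_]
  · simp [q]
  · simpa [q, Function.update_of_ne hi] using hp_one i hi

end

theorem lintegral_pi_average_mul_prod {ι α : Type*} [Fintype ι] [Nonempty ι]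
    [MeasurableSpace α] (ν : Measure α) [SigmaFinite ν] {p h : α → ℝ≥0∞}
    (hp : Measurable p) (hp_one : ∫⁻ t, p t ∂ν = 1) (hh : Measurable h) :
    ∫⁻ x : ι → α, ((Fintype.card ι : ℝ≥0∞)⁻¹ * ∑ i, h (x i)) * ∏ i, p (x i)
        ∂Measure.pi (fun _ => ν) = ∫⁻ t, h t * p t ∂ν := by
  classical
  have hterm : ∀ i, ∫⁻ x : ι → α, h (x i) * ∏ j, p (x j) ∂Measure.pi (fun _ => ν) =
      ∫⁻ t, h t * p t ∂ν :=
    fun i => lintegral_pi_comp_eval_mul_prod (fun _ => hp) (fun _ _ => hp_one) hh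
  calc ∫⁻ x : ι → α, ((Fintype.card ι : ℝ≥0∞)⁻¹ * ∑ i, h (x i)) * ∏ i, p (x i)
          ∂Measure.pi (fun _ => ν)
      = (Fintype.card ι : ℝ≥0∞)⁻¹ * ∑ i, ∫⁻ x : ι → α, h (x i) * ∏ j, p (x j)
          ∂Measure.pi (fun _ => ν) := by
        simp_rw [mul_assoc, sum_mul]
        rw [lintegral_const_mul _ (by fun_prop), lintegral_finsetSum _ fun i _ => by fun_prop]
    _ = ∫⁻ t, h t * p t ∂ν := by
        simp_rw [hterm, sum_const, card_univ, nsmul_eq_mul, ← mul_assoc]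
        rw [ENNReal.inv_mul_cancel (by simp) (by simp), one_mul]

theorem abc_joint_and_marginal_normalizing_constants_general
    {E 𝒯 : Type*} [MeasurableSpace E] [MeasurableSpace 𝒯]
    [AddGroup 𝒯] [MeasurableSub₂ 𝒯]
    (μ : Measure E) (ν : Measure 𝒯) [SigmaFinite ν]
    (π : E → ℝ≥0∞) (f : E → 𝒯 → ℝ≥0∞) (K : 𝒯 → ℝ≥0∞)
    (hf : Measurable (Function.uncurry f))
    (hfprob : ∀ θ, ∫⁻ t, f θ t ∂ν = 1)
    (hK : Measurable K)
    (t_y : 𝒯) (S : ℕ) (hS : 1 ≤ S) :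
    (∫⁻ θ, ∫⁻ ts : Fin S → 𝒯,
        ((S : ℝ≥0∞)⁻¹ * ∑ s : Fin S, K (t_y - ts s)) * (∏ s : Fin S, f θ (ts s)) * π θ
        ∂(Measure.pi fun _ : Fin S => ν) ∂μ) =
      (∫⁻ θ, ∫⁻ t, K (t_y - t) * f θ t * π θ ∂ν ∂μ) ∧
    ∀ θ : E,
      (∫⁻ ts : Fin S → 𝒯,
          (((S : ℝ≥0∞)⁻¹ * ∑ s : Fin S, K (t_y - ts s)) * (∏ s : Fin S, f θ (ts s)) *
              π θ) /
            (∫⁻ θ', ∫⁻ t, K (t_y - t) * f θ' t * π θ' ∂ν ∂μ)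
          ∂(Measure.pi fun _ : Fin S => ν)) =
        (π θ * ∫⁻ t, K (t_y - t) * f θ t ∂ν) /
          (∫⁻ θ', ∫⁻ t, K (t_y - t) * f θ' t * π θ' ∂ν ∂μ) := by
  have : Nonempty (Fin S) := ⟨⟨0, hS⟩⟩
  have hK' : Measurable fun t => K (t_y - t) := hK.comp (measurable_const.sub measurable_id)
  have hf' : ∀ θ, Measurable (f θ) := fun θ => hf.comp measurable_prodMk_left
  have hjoint : ∀ θ, ∫⁻ ts : Fin S → 𝒯,
      ((S : ℝ≥0∞)⁻¹ * ∑ s : Fin S, K (t_y - ts s)) * (∏ s : Fin S, f θ (ts s)) * π θ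
        ∂(Measure.pi fun _ : Fin S => ν) = (∫⁻ t, K (t_y - t) * f θ t ∂ν) * π θ := by
    intro θ
    rw [lintegral_mul_const _ (by fun_prop),
      ← lintegral_pi_average_mul_prod (ι := Fin S) ν (hf' θ) (hfprob θ) hK', Fintype.card_fin]
  refine ⟨lintegral_congr fun θ => ?_, fun θ => ?_⟩
  · rw [hjoint, lintegral_mul_const _ (by fun_prop)]
  · simp_rw [div_eq_mul_inv]
    rw [lintegral_mul_const _ (by fun_prop), hjoint, mul_comm (π θ)]

/-- The normalizing constants of the joint and marginal ABC posteriors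
coincide:
`∫_E ∫_{𝒯^S} [S⁻¹ ∑_s K_h(t_y − t^s)] [∏_s f(t^s|θ)] π(θ) dt^{1:S} dθ
   = ∫_E ∫_𝒯 K_h(t_y − t) f(t|θ) π(θ) dt dθ`,
and consequently the normalized joint posterior `π_J(θ, t^{1:S}|t_y)` integrates
over `𝒯^S` exactly to the normalized marginal posterior `π_M(θ|t_y)`. -/
theorem abc_joint_and_marginal_normalizing_constants
    {E 𝒯 : Type*} [MeasurableSpace E] [MeasurableSpace 𝒯]
    [AddGroup 𝒯] [MeasurableSub₂ 𝒯]
    (μ : Measure E) (ν : Measure 𝒯) [SigmaFinite μ] [SigmaFinite ν]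
    (π : E → ℝ≥0∞) (f : E → 𝒯 → ℝ≥0∞) (K : 𝒯 → ℝ≥0∞)
    (hπ : Measurable π) (hπprob : ∫⁻ θ, π θ ∂μ = 1)
    (hf : Measurable (Function.uncurry f))
    (hfprob : ∀ θ, ∫⁻ t, f θ t ∂ν = 1)
    (hK : Measurable K)
    (t_y : 𝒯) (S : ℕ) (hS : 1 ≤ S)
    (hfin : (∫⁻ θ, ∫⁻ t, K (t_y - t) * f θ t * π θ ∂ν ∂μ) ≠ ⊤)
    (hpos : 0 < ∫⁻ θ, ∫⁻ t, K (t_y - t) * f θ t * π θ ∂ν ∂μ) :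
    (∫⁻ θ, ∫⁻ ts : Fin S → 𝒯,
        ((S : ℝ≥0∞)⁻¹ * ∑ s : Fin S, K (t_y - ts s)) * (∏ s : Fin S, f θ (ts s)) * π θ
        ∂(Measure.pi fun _ : Fin S => ν) ∂μ) =
      (∫⁻ θ, ∫⁻ t, K (t_y - t) * f θ t * π θ ∂ν ∂μ) ∧
    ∀ θ : E,
      (∫⁻ ts : Fin S → 𝒯,
          (((S : ℝ≥0∞)⁻¹ * ∑ s : Fin S, K (t_y - ts s)) * (∏ s : Fin S, f θ (ts s)) *
              π θ) /
            (∫⁻ θ', ∫⁻ t, K (t_y - t) * f θ' t * π θ' ∂ν ∂μ)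
          ∂(Measure.pi fun _ : Fin S => ν)) =
        (π θ * ∫⁻ t, K (t_y - t) * f θ t ∂ν) /
          (∫⁻ θ', ∫⁻ t, K (t_y - t) * f θ' t * π θ' ∂ν ∂μ) :=
  abc_joint_and_marginal_normalizing_constants_general μ ν π f K hf hfprob hK t_y S hS
end
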